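/- Let T, N_t, N_r be positive integers with N_t ≤ min(T, N_r). Let Y = U Σ V^H, where U ∈ ℂ^{T×N_t} has orthonormal columns (U^H U = I_{N_t}), V ∈ ℂ^{N_r×N_t} has orthonormal columns, and Σ = diag(σ_1,…,σ_{N_t}) with σ_1 ≥ σ_2 ≥ … ≥ σ_{N_t} ≥ 0. Then for every matrix μ ∈ ℂ^{T×N_t} with orthonormal columns (μ^H μ = I_{N_t}): σ_{N_t}² · (N_t − d_p²(U, μ)) ≤ Re tr(Y^H μ μ^H Y) ≤ σ_1² · (N_t − d_p²(U, μ)). -/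
import Mathlib


open Matrix

/-- **Lemma 3.** For `Y = U Σ Vᴴ` with `U, V` having orthonormal columns and
`Σ = diag(σ₁ ≥ ⋯ ≥ σ_{N_t} ≥ 0)`, and any orthonormal-column codeword `μ`,
`σ_{N_t}² (N_t − d_p²(U,μ)) ≤ Re tr(Yᴴ μ μᴴ Y) ≤ σ₁² (N_t − d_p²(U,μ))`,
where `d_p²(Υ,Υ') = N_t − Re tr(Υ Υᴴ Υ' Υ'ᴴ)` is the squared Procrustes distance. -/
theorem trace_bounds_procrustes
    (T Nt Nr : ℕ) (hT : 0 < T) (hNt : 0 < Nt) (hNr : 0 < Nr)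
    (hNtT : Nt ≤ T) (hNtNr : Nt ≤ Nr)
    (U : Matrix (Fin T) (Fin Nt) ℂ) (hU : Uᴴ * U = 1)
    (V : Matrix (Fin Nr) (Fin Nt) ℂ) (hV : Vᴴ * V = 1)
    (σ : Fin Nt → ℝ) (hσmono : ∀ i j : Fin Nt, i ≤ j → σ j ≤ σ i)
    (hσnonneg : ∀ i, 0 ≤ σ i)
    (Y : Matrix (Fin T) (Fin Nr) ℂ)
    (hY : Y = U * Matrix.diagonal (fun i => (σ i : ℂ)) * Vᴴ)
    (μ : Matrix (Fin T) (Fin Nt) ℂ) (hμ : μᴴ * μ = 1)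
    (dp2 : ℝ)
    (hdp2 : dp2 = (Nt : ℝ) - (Matrix.trace (U * Uᴴ * μ * μᴴ)).re) :
    σ ⟨Nt - 1, by omega⟩ ^ 2 * ((Nt : ℝ) - dp2) ≤
        (Matrix.trace (Yᴴ * μ * μᴴ * Y)).re ∧
      (Matrix.trace (Yᴴ * μ * μᴴ * Y)).re ≤ σ ⟨0, hNt⟩ ^ 2 * ((Nt : ℝ) - dp2) := by
  set D : Matrix (Fin Nt) (Fin Nt) ℂ := Matrix.diagonal (fun i => (σ i : ℂ)) with hD
  set B : Matrix (Fin Nt) (Fin Nt) ℂ := Uᴴ * (μ * (μᴴ * U)) with hB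
  have hDher : Dᴴ = D := by
    have hst : (star fun i => ((σ i : ℂ))) = fun i => ((σ i : ℂ)) := by
      funext i
      simp only [Pi.star_apply, Complex.star_def, Complex.conj_ofReal]
    rw [hD, Matrix.diagonal_conjTranspose, hst]
  have key : Yᴴ * μ * μᴴ * Y = V * (D * B * D) * Vᴴ := by
    subst hY
    simp only [conjTranspose_mul, hDher, conjTranspose_conjTranspose, hB, Matrix.mul_assoc]
  have htr : (Matrix.trace (Yᴴ * μ * μᴴ * Y)) = ∑ i, (σ i : ℂ) * B i i * (σ i : ℂ) := by
    rw [key, Matrix.trace_mul_cycle, ← Matrix.mul_assoc, hV, one_mul, Matrix.trace]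
    congr 1
    funext i
    simp [Matrix.diag, hD, Matrix.mul_apply, Matrix.diagonal, Finset.mul_sum]
  have htr_re : (Matrix.trace (Yᴴ * μ * μᴴ * Y)).re = ∑ i, σ i * σ i * (B i i).re := by
    rw [htr, Complex.re_sum]
    congr 1
    funext i
    rw [mul_comm ((σ i : ℂ) * B i i) ((σ i : ℂ)), ← mul_assoc, ← Complex.ofReal_mul,
      Complex.re_ofReal_mul]
  have hBnn : ∀ i, 0 ≤ (B i i).re := by
    intro i
    have hB2 : B = (μᴴ * U)ᴴ * (μᴴ * U) := by
      rw [hB, conjTranspose_mul, conjTranspose_conjTranspose, Matrix.mul_assoc]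
    rw [hB2]
    simp only [Matrix.mul_apply, conjTranspose_apply, Complex.re_sum]
    apply Finset.sum_nonneg
    intro k _
    rw [mul_comm, Complex.star_def, Complex.mul_conj]
    simp [Complex.normSq_nonneg]
  have hsum : ((Nt : ℝ) - dp2) = ∑ i, (B i i).re := by
    rw [hdp2]
    have : Matrix.trace (U * Uᴴ * μ * μᴴ) = Matrix.trace B := by
      have e1 : U * Uᴴ * μ * μᴴ = U * (Uᴴ * (μ * μᴴ)) := by
        simp [Matrix.mul_assoc]
      rw [hB, e1, Matrix.trace_mul_comm]
      simp [Matrix.mul_assoc]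
    have h3 : (Matrix.trace B).re = ∑ i, (B i i).re := by
      rw [Matrix.trace, Complex.re_sum]; rfl
    rw [this, h3]
    ring
  constructor
  · rw [htr_re, hsum, Finset.mul_sum]
    apply Finset.sum_le_sum
    intro i _
    have h1 : σ ⟨Nt - 1, by omega⟩ ≤ σ i :=
      hσmono i ⟨Nt - 1, by omega⟩ (Fin.mk_le_mk.mpr (by omega))
    have h2 : σ ⟨Nt - 1, by omega⟩ ^ 2 ≤ σ i * σ i := by
      rw [sq]
      exact mul_le_mul h1 h1 (hσnonneg _) (hσnonneg i)
    exact mul_le_mul_of_nonneg_right h2 (hBnn i)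
  · rw [htr_re, hsum, Finset.mul_sum]
    apply Finset.sum_le_sum
    intro i _
    have h1 : σ i ≤ σ ⟨0, hNt⟩ :=
      hσmono ⟨0, hNt⟩ i (Fin.mk_le_mk.mpr (Nat.zero_le _))
    have h2 : σ i * σ i ≤ σ ⟨0, hNt⟩ ^ 2 := by
      rw [sq]
      exact mul_le_mul h1 h1 (hσnonneg i) (hσnonneg _)
    exact mul_le_mul_of_nonneg_right h2 (hBnn i)
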